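/- Let H₀, H₁ be Hilbert spaces, α ∈ L(H₀), β ∈ L(H₁) selfadjoint with α, β ≥ c > 0, γ ∈ L(H₀) with Re γ ≥ c, and C : dom(C) ⊆ H₀ → H₁ densely defined, closed, with closed range. Then there exists δ > 0 such that every classical solution U ∈ C¹([0,∞); H₀ × H₁) ∩ C([0,∞); dom(C) × dom(C*)) of (diag(α, β) U)'(t) = ([[−γ, 0],[0, 0]] + [[0, C*],[−C, 0]]) U(t) with U(0) = (u₀, v₀), u₀ ∈ dom(C), v₀ ∈ dom(C*) ∩ β⁻¹ ran(C), satisfies ‖U(t)‖ ≤ M e^{-δ t} ‖(u₀, v₀)‖ for some constant M ≥ 1 independent of the initial data. -/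

import Mathlib

/-!
Along a solution, the energy `E = re ⟪αu, u⟫ + re ⟪βv, v⟫` has derivative `-2 re ⟪γu, u⟫`,
which damps only `u`. Since `βv` starts in the closed range of `C` and `(βv)' = -Cu`, it stays
there, so `βv = Cw` with `w = G (βv)` for a bounded right inverse `G` of `C` satisfying
`‖G (Cx)‖ ≤ ‖x‖`. Differentiating the cross term `re ⟪αu, w⟫` produces `re ⟪βv, v⟫ ≥ c ‖v‖²`.
For small `ε > 0` the functional `E - 2ε re ⟪αu, w⟫` is comparable to `‖u‖² + ‖v‖²` and its
derivative is at most `-εc (‖u‖² + ‖v‖²)`, so Grönwall's inequality gives exponential decay.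
-/

open Set
open scoped InnerProductSpace

namespace LinearPMap

variable {𝕜 E F : Type*} [RCLike 𝕜] [NormedAddCommGroup E] [InnerProductSpace 𝕜 E]
  [NormedAddCommGroup F] [InnerProductSpace 𝕜 F] {T : E →ₗ.[𝕜] F}

theorem inner_eq_of_mem_graph_of_mem_adjoint_graph [CompleteSpace E]
    (hT : Dense (T.domain : Set E)) {x w : E} {y z : F} (hxy : (x, y) ∈ T.graph)
    (hzw : (z, w) ∈ T.adjoint.graph) : ⟪w, x⟫_𝕜 = ⟪z, y⟫_𝕜 := by
  obtain ⟨x, rfl, rfl⟩ := T.mem_graph_iff.mp hxy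
  obtain ⟨z, rfl, rfl⟩ := T.adjoint.mem_graph_iff.mp hzw
  exact adjoint_isFormalAdjoint hT z x

variable (T) in
def ker : Submodule 𝕜 E := T.graph.comap (LinearMap.inl 𝕜 E F)

theorem mem_ker {x : E} : x ∈ T.ker ↔ (x, 0) ∈ T.graph := Iff.rfl

theorem IsClosed.isClosed_ker (hT : T.IsClosed) : _root_.IsClosed (T.ker : Set E) :=
  hT.preimage (continuous_id.prodMk continuous_const)

variable (T) in
def reducedGraph : Submodule 𝕜 (E × F) := T.graph ⊓ T.kerᗮ.prod ⊤

theorem IsClosed.isClosed_reducedGraph (hT : T.IsClosed) :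
    _root_.IsClosed (T.reducedGraph : Set (E × F)) :=
  _root_.IsClosed.inter hT (T.ker.isClosed_orthogonal.prod isClosed_univ)

theorem fst_eq_zero_of_mem_reducedGraph {z : E × F} (hz : z ∈ T.reducedGraph) (h : z.2 = 0) :
    z.1 = 0 := by
  have hker : z.1 ∈ T.ker := by rw [mem_ker, ← h]; exact hz.1
  exact T.ker.inf_orthogonal_eq_bot.le ⟨hker, hz.2.1⟩

theorem norm_fst_le_of_mem_reducedGraph {z : E × F} (hz : z ∈ T.reducedGraph) {x : E}
    (hx : (x, z.2) ∈ T.graph) : ‖z.1‖ ≤ ‖x‖ := by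
  have hker : x - z.1 ∈ T.ker := by
    rw [mem_ker, ← sub_self z.2]; exact T.graph.sub_mem hx hz.1
  have hpyth := norm_add_sq_eq_norm_sq_add_norm_sq_of_inner_eq_zero (𝕜 := 𝕜) _ _
    (T.ker.inner_right_of_mem_orthogonal hker hz.2.1)
  rw [sub_add_cancel] at hpyth
  nlinarith [norm_nonneg x, norm_nonneg z.1, mul_self_nonneg ‖x - z.1‖]

theorem IsClosed.exists_mem_reducedGraph [CompleteSpace E] (hT : T.IsClosed) {x : E} {y : F}
    (hxy : (x, y) ∈ T.graph) : ∃ z ∈ T.reducedGraph, z.2 = y := by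
  have : CompleteSpace T.ker := hT.isClosed_ker.completeSpace_coe
  have hproj : (T.ker.starProjection x, (0 : F)) ∈ T.graph := T.ker.starProjection_apply_mem x
  refine ⟨(x - T.ker.starProjection x, y), ⟨?_, ?_, trivial⟩, rfl⟩
  · simpa using T.graph.sub_mem hxy hproj
  · exact T.ker.sub_starProjection_mem_orthogonal x

theorem mem_range_of_mem_graph {x : E} {y : F} (h : (x, y) ∈ T.graph) :
    y ∈ LinearMap.range T.toFun := by
  rw [← graph_map_snd_eq_range]; exact Submodule.mem_map_of_mem h

/-- For `y` in the range of `T`, `G y` is its preimage in `T.kerᗮ`, i.e. the one of least norm;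
it depends continuously on `y` by Banach's theorem. -/
theorem IsClosed.exists_clm_preimage [CompleteSpace E] [CompleteSpace F] (hT : T.IsClosed)
    (hran : _root_.IsClosed (LinearMap.range T.toFun : Set F)) :
    ∃ G : F →L[𝕜] E, ∀ x y, (x, y) ∈ T.graph → (G y, y) ∈ T.graph ∧ ‖G y‖ ≤ ‖x‖ := by
  have : CompleteSpace T.reducedGraph := hT.isClosed_reducedGraph.completeSpace_coe
  set f : T.reducedGraph →L[𝕜] F := (ContinuousLinearMap.snd 𝕜 E F).comp T.reducedGraph.subtypeL
  have hinj : Function.Injective f := by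
    refine (injective_iff_map_eq_zero f).mpr fun z hz => Subtype.ext (Prod.ext ?_ hz)
    exact fst_eq_zero_of_mem_reducedGraph z.2 hz
  have hrange : Set.range f = LinearMap.range T.toFun := by
    ext y
    simp only [← graph_map_snd_eq_range, SetLike.mem_coe, Submodule.mem_map]
    constructor
    · rintro ⟨z, rfl⟩
      exact ⟨z, z.2.1, rfl⟩
    · rintro ⟨⟨x, y⟩, hxy, rfl⟩
      obtain ⟨z, hz, rfl⟩ := hT.exists_mem_reducedGraph hxy
      exact ⟨⟨z, hz⟩, rfl⟩
  have hclosed : _root_.IsClosed (Set.range f) := hrange ▸ hran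
  have : CompleteSpace (LinearMap.range (f : T.reducedGraph →ₗ[𝕜] F)) :=
    hclosed.completeSpace_coe
  set e := f.equivRange hinj hclosed
  refine ⟨(ContinuousLinearMap.fst 𝕜 E F).comp (T.reducedGraph.subtypeL.comp
    ((e.symm : _ →L[𝕜] T.reducedGraph).comp
      (LinearMap.range (f : T.reducedGraph →ₗ[𝕜] F)).orthogonalProjectionOnto)),
    fun x y hxy => ?_⟩
  obtain ⟨z, hz, rfl⟩ := hT.exists_mem_reducedGraph hxy
  have hproj : (LinearMap.range (f : T.reducedGraph →ₗ[𝕜] F)).orthogonalProjectionOnto z.2 =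
      ⟨f ⟨z, hz⟩, LinearMap.mem_range_self _ _⟩ :=
    Submodule.orthogonalProjectionOnto_mem_subspace_eq_self ⟨f ⟨z, hz⟩, _⟩
  have he : e.symm ⟨f ⟨z, hz⟩, LinearMap.mem_range_self _ _⟩ = ⟨z, hz⟩ :=
    f.equivRange_symm_apply hinj hclosed _
  simp only [ContinuousLinearMap.comp_apply, hproj, ContinuousLinearEquiv.coe_coe, he]
  exact ⟨hz.1, norm_fst_le_of_mem_reducedGraph hz hxy⟩

end LinearPMap

theorem ContinuousLinearMap.norm_apply_apply_le {𝕜 E F G : Type*} [NontriviallyNormedField 𝕜]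
    [SeminormedAddCommGroup E] [NormedSpace 𝕜 E] [SeminormedAddCommGroup F] [NormedSpace 𝕜 F]
    [SeminormedAddCommGroup G] [NormedSpace 𝕜 G] (A : F →L[𝕜] G) (B : E →L[𝕜] F) (x : E) :
    ‖A (B x)‖ ≤ ‖A‖ * ‖B‖ * ‖x‖ :=
  ((A.comp B).le_opNorm x).trans (mul_le_mul_of_nonneg_right (A.opNorm_comp_le B) (norm_nonneg x))

section InnerProductSpace

variable {H : Type*} [NormedAddCommGroup H] [InnerProductSpace ℂ H]

theorem abs_re_inner_apply_le {E : Type*} [NormedAddCommGroup E] [InnerProductSpace ℂ E]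
    (A : E →L[ℂ] H) (x : E) (y : H) :
    |(⟪A x, y⟫_ℂ).re| ≤ ‖A‖ * ‖x‖ * ‖y‖ :=
  (Complex.abs_re_le_norm _).trans <| (norm_inner_le_norm _ _).trans <|
    mul_le_mul_of_nonneg_right (A.le_opNorm x) (norm_nonneg y)

theorem complex_inner_re_symm (x y : H) : (⟪x, y⟫_ℂ).re = (⟪y, x⟫_ℂ).re := by
  rw [← inner_conj_symm, Complex.conj_re]

theorem IsSelfAdjoint.isUnit_of_coercive [CompleteSpace H] {A : H →L[ℂ] H}
    (hA : IsSelfAdjoint A) {c : ℝ} (hc : 0 < c) (hAc : ∀ x, c * ‖x‖ ^ 2 ≤ (⟪A x, x⟫_ℂ).re) :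
    IsUnit A := by
  have hle : algebraMap ℝ (H →L[ℂ] H) c ≤ A := by
    rw [ContinuousLinearMap.le_def, ContinuousLinearMap.isPositive_def']
    refine ⟨hA.sub (.algebraMap _ (.all c)), fun x => ?_⟩
    have hcx : (⟪c • x, x⟫_ℂ).re = c * ‖x‖ ^ 2 := by
      rw [← Complex.coe_smul, inner_smul_left, Complex.conj_ofReal, Complex.re_ofReal_mul,
        ← RCLike.re_to_complex, inner_self_eq_norm_sq]
    simpa [ContinuousLinearMap.reApplyInnerSelf, inner_sub_left, Algebra.algebraMap_eq_smul_one,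
      hcx] using hAc x
  exact (IsStrictlyPositive.of_le (isStrictlyPositive_algebraMap hc) hle).isUnit

theorem HasDerivWithinAt.re_inner {f g : ℝ → H} {f' g' : H} {s : Set ℝ} {t : ℝ}
    (hf : HasDerivWithinAt f f' s t) (hg : HasDerivWithinAt g g' s t) :
    HasDerivWithinAt (fun t => (⟪f t, g t⟫_ℂ).re) ((⟪f t, g'⟫_ℂ).re + (⟪f', g t⟫_ℂ).re) s t :=
  Complex.reCLM.hasFDerivAt.comp_hasDerivWithinAt t (hf.inner ℂ hg)

theorem HasDerivWithinAt.re_inner_apply_self [CompleteSpace H] {A : H →L[ℂ] H}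
    (hA : IsSelfAdjoint A) (hAu : IsUnit A) {u : ℝ → H} {p : H} {s : Set ℝ} {t : ℝ}
    (hu : HasDerivWithinAt (fun t => A (u t)) p s t) :
    HasDerivWithinAt (fun t => (⟪A (u t), u t⟫_ℂ).re) (2 * (⟪p, u t⟫_ℂ).re) s t := by
  obtain ⟨B, rfl⟩ := hAu
  have hu' : HasDerivWithinAt u ((↑B⁻¹ : H →L[ℂ] H) p) s t := by
    have hinv : ∀ x, (↑B⁻¹ : H →L[ℂ] H) ((B : H →L[ℂ] H) x) = x := fun x => by
      change (↑B⁻¹ * ↑B : H →L[ℂ] H) x = x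
      rw [B.inv_mul]; rfl
    simpa [Function.comp_def, hinv] using
      ((↑B⁻¹ : H →L[ℂ] H).restrictScalars ℝ).hasFDerivAt.comp_hasDerivWithinAt t hu
  have hsymm : ⟪(B : H →L[ℂ] H) (u t), (↑B⁻¹ : H →L[ℂ] H) p⟫_ℂ = ⟪u t, p⟫_ℂ := by
    rw [← hA.adjoint_eq, ContinuousLinearMap.adjoint_inner_left]
    change ⟪u t, (↑B * ↑B⁻¹ : H →L[ℂ] H) p⟫_ℂ = _
    rw [B.mul_inv]; rfl
  convert hu.re_inner hu' using 1
  rw [hsymm, two_mul, complex_inner_re_symm (u t)]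

theorem Submodule.mem_of_hasDerivWithinAt_mem [CompleteSpace H] {S : Submodule ℂ H}
    (hS : IsClosed (S : Set H)) {f f' : ℝ → H}
    (hf : ∀ t, 0 ≤ t → HasDerivWithinAt f (f' t) (Ici 0) t) (hf' : ∀ t, 0 ≤ t → f' t ∈ S)
    (h0 : f 0 ∈ S) {t : ℝ} (ht : 0 ≤ t) : f t ∈ S := by
  have : CompleteSpace S := hS.completeSpace_coe
  have hP : ∀ s, 0 ≤ s →
      HasDerivWithinAt (fun s => Sᗮ.orthogonalProjectionOnto (f s)) 0 (Ici 0) s := fun s hs => by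
    have h := (Sᗮ.orthogonalProjectionOnto.restrictScalars ℝ).hasFDerivAt.comp_hasDerivWithinAt s
      (hf s hs)
    rwa [ContinuousLinearMap.coe_restrictScalars',
      Sᗮ.orthogonalProjectionOnto_eq_zero_iff.mpr (S.le_orthogonal_orthogonal (hf' s hs))] at h
  have hconst := constant_of_has_deriv_right_zero
    (fun s hs => (hP s hs.1).continuousWithinAt.mono fun r hr => hr.1)
    (fun s hs => (hP s hs.1).mono (Ici_subset_Ici.mpr hs.1)) t ⟨ht, le_rfl⟩
  rwa [Sᗮ.orthogonalProjectionOnto_eq_zero_iff.mpr (S.le_orthogonal_orthogonal h0),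
    Submodule.orthogonalProjectionOnto_eq_zero_iff, S.orthogonal_orthogonal] at hconst

end InnerProductSpace

theorem le_mul_exp_of_hasDerivWithinAt_le {F : ℝ → ℝ} {k : ℝ}
    (hF : ∀ t, 0 ≤ t → ∃ F', HasDerivWithinAt F F' (Ici 0) t ∧ F' ≤ k * F t)
    {t : ℝ} (ht : 0 ≤ t) : F t ≤ F 0 * Real.exp (k * t) := by
  choose! F' hF' hle using hF
  have := le_gronwallBound_of_liminf_deriv_right_le (f := F) (f' := F') (ε := 0) (b := t)
    (fun s hs => (hF' s hs.1).continuousWithinAt.mono fun r hr => hr.1)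
    (fun s hs _ hr => ((hF' s hs.1).mono (Ici_subset_Ici.mpr hs.1)).liminf_right_slope_le hr)
    le_rfl (fun s hs => by simpa using hle s hs.1) t ⟨ht, le_rfl⟩
  simpa [gronwallBound_ε0] using this

theorem le_mul_exp_of_lyapunov {F N : ℝ → ℝ} {a b κ : ℝ} (ha : 0 < a) (hb : 0 < b) (hκ : 0 ≤ κ)
    (hF : ∀ t, 0 ≤ t → ∃ F', HasDerivWithinAt F F' (Ici 0) t ∧ F' ≤ -κ * N t)
    (hlow : ∀ t, 0 ≤ t → a * N t ≤ F t) (hup : ∀ t, 0 ≤ t → F t ≤ b * N t) {t : ℝ}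
    (ht : 0 ≤ t) : N t ≤ b / a * Real.exp (-(κ / b) * t) * N 0 := by
  have hdecay : F t ≤ F 0 * Real.exp (-(κ / b) * t) := by
    refine le_mul_exp_of_hasDerivWithinAt_le (fun s hs => ?_) ht
    obtain ⟨F', hF', hle⟩ := hF s hs
    refine ⟨F', hF', hle.trans ?_⟩
    have := mul_le_mul_of_nonneg_left (hup s hs) (div_nonneg hκ hb.le)
    rw [← mul_assoc, div_mul_cancel₀ _ hb.ne'] at this
    linarith
  rw [show b / a * Real.exp (-(κ / b) * t) * N 0 = b * N 0 * Real.exp (-(κ / b) * t) / a by ring,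
    le_div_iff₀ ha, mul_comm (N t)]
  calc a * N t ≤ F 0 * Real.exp (-(κ / b) * t) := (hlow t ht).trans hdecay
    _ ≤ b * N 0 * Real.exp (-(κ / b) * t) := by gcongr; exact hup 0 le_rfl

theorem Prod.norm_le_sqrt_mul_exp {E F : Type*} [SeminormedAddCommGroup E]
    [SeminormedAddCommGroup F] {x y : E × F} {M k t : ℝ} (hM : 0 ≤ M)
    (h : ‖x.1‖ ^ 2 + ‖x.2‖ ^ 2 ≤ M * Real.exp (-k * t) * (‖y.1‖ ^ 2 + ‖y.2‖ ^ 2)) :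
    ‖x‖ ≤ Real.sqrt (2 * M) * Real.exp (-(k / 2) * t) * ‖y‖ := by
  have hx : ‖x‖ ^ 2 ≤ ‖x.1‖ ^ 2 + ‖x.2‖ ^ 2 := by
    rcases max_choice ‖x.1‖ ‖x.2‖ with h | h <;> rw [Prod.norm_def, h]
    exacts [le_add_of_nonneg_right (sq_nonneg _), le_add_of_nonneg_left (sq_nonneg _)]
  have hy : ‖y.1‖ ^ 2 + ‖y.2‖ ^ 2 ≤ 2 * ‖y‖ ^ 2 := by
    nlinarith [norm_fst_le y, norm_snd_le y, norm_nonneg y.1, norm_nonneg y.2]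
  rw [← Real.sqrt_sq (norm_nonneg x), show -(k / 2) * t = -k * t / 2 by ring, Real.exp_half,
    ← Real.sqrt_sq (norm_nonneg y), ← Real.sqrt_mul (by positivity),
    ← Real.sqrt_mul (by positivity)]
  refine Real.sqrt_le_sqrt (hx.trans (h.trans ?_))
  calc M * Real.exp (-k * t) * (‖y.1‖ ^ 2 + ‖y.2‖ ^ 2)
      ≤ M * Real.exp (-k * t) * (2 * ‖y‖ ^ 2) := by gcongr
    _ = _ := by ring

theorem exists_small_weight {a K g c : ℝ} (ha : 0 ≤ a) (hK : 0 ≤ K) (hc : 0 < c) :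
    ∃ ε > 0, ε ≤ 1 ∧ 2 * ε * (a * K) ≤ c ∧ ε * (2 * a + g ^ 2 / c) ≤ c := by
  set D := c + 2 * a * (1 + K) + g ^ 2 / c
  have hD : 0 ≤ 2 * a * (1 + K) ∧ 0 ≤ g ^ 2 / c := ⟨by positivity, by positivity⟩
  have hle : ∀ X, X ≤ D → c / D * X ≤ c := fun X hX => by
    rw [div_mul_eq_mul_div, div_le_iff₀ (by positivity)]
    exact mul_le_mul_of_nonneg_left hX hc.le
  refine ⟨c / D, by positivity, ?_, ?_, hle _ (by nlinarith [mul_nonneg ha hK])⟩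
  · exact (div_le_one (by positivity)).mpr (by linarith)
  · linarith [hle (2 * (a * K)) (by nlinarith)]

theorem exists_hasDerivWithinAt_prod_mem_graph {H₀ H₁ : Type*} [NormedAddCommGroup H₀] [InnerProductSpace ℂ H₀]
    [CompleteSpace H₀] [NormedAddCommGroup H₁] [InnerProductSpace ℂ H₁] {C : H₀ →ₗ.[ℂ] H₁}
    {γ : H₀ →L[ℂ] H₀} {f : ℝ → H₀ × H₁} {u : H₀} {v : H₁} {s : Set ℝ} {t : ℝ}
    (h : ∃ (hu : u ∈ C.domain) (hv : v ∈ C.adjoint.domain),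
      HasDerivWithinAt f (-(γ u) + C.adjoint ⟨v, hv⟩, -(C ⟨u, hu⟩)) s t) :
    ∃ p q, HasDerivWithinAt f (p, q) s t ∧ (u, -q) ∈ C.graph ∧ (v, p + γ u) ∈ C.adjoint.graph := by
  obtain ⟨hu, hv, hf⟩ := h
  exact ⟨_, _, hf, by simpa using C.mem_graph ⟨u, hu⟩, by simpa using C.adjoint.mem_graph ⟨v, hv⟩⟩

section PerturbedEnergy

variable {H₀ H₁ : Type*} [NormedAddCommGroup H₀] [InnerProductSpace ℂ H₀]
  [NormedAddCommGroup H₁] [InnerProductSpace ℂ H₁]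
  {α : H₀ →L[ℂ] H₀} {β : H₁ →L[ℂ] H₁} {G : H₁ →L[ℂ] H₀} {ε c : ℝ}

variable (α β G) in
noncomputable def perturbedEnergy (ε : ℝ) (x : H₀ × H₁) : ℝ :=
  (⟪α x.1, x.1⟫_ℂ).re + (⟪β x.2, x.2⟫_ℂ).re - 2 * ε * (⟪α x.1, G (β x.2)⟫_ℂ).re

theorem abs_two_mul_re_inner_le (hε : 0 ≤ ε) (hεc : 2 * ε * (‖α‖ * (‖G‖ * ‖β‖)) ≤ c)
    (x : H₀ × H₁) :
    |2 * ε * (⟪α x.1, G (β x.2)⟫_ℂ).re| ≤ c / 2 * (‖x.1‖ ^ 2 + ‖x.2‖ ^ 2) := by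
  have hαw := (abs_re_inner_apply_le α x.1 (G (β x.2))).trans <|
    mul_le_mul_of_nonneg_left (G.norm_apply_apply_le β x.2) (by positivity)
  rw [abs_mul, abs_of_nonneg (by positivity)]
  calc 2 * ε * |(⟪α x.1, G (β x.2)⟫_ℂ).re|
      ≤ 2 * ε * (‖α‖ * (‖G‖ * ‖β‖)) * (‖x.1‖ * ‖x.2‖) := by
        nlinarith [mul_le_mul_of_nonneg_left hαw (by positivity : (0 : ℝ) ≤ 2 * ε)]
    _ ≤ c * (‖x.1‖ * ‖x.2‖) := by gcongr
    _ ≤ c / 2 * (‖x.1‖ ^ 2 + ‖x.2‖ ^ 2) := by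
        have hc : 0 ≤ c := le_trans (by positivity) hεc
        nlinarith [mul_nonneg hc (sq_nonneg (‖x.1‖ - ‖x.2‖))]

theorem half_mul_le_perturbedEnergy (hε : 0 ≤ ε) (hεc : 2 * ε * (‖α‖ * (‖G‖ * ‖β‖)) ≤ c)
    (hαc : ∀ x, c * ‖x‖ ^ 2 ≤ (⟪α x, x⟫_ℂ).re) (hβc : ∀ x, c * ‖x‖ ^ 2 ≤ (⟪β x, x⟫_ℂ).re)
    (x : H₀ × H₁) : c / 2 * (‖x.1‖ ^ 2 + ‖x.2‖ ^ 2) ≤ perturbedEnergy α β G ε x := by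
  have := (abs_le.mp (abs_two_mul_re_inner_le hε hεc x)).2
  simp only [perturbedEnergy]
  linarith [hαc x.1, hβc x.2]

theorem perturbedEnergy_le (hε : 0 ≤ ε) (hεc : 2 * ε * (‖α‖ * (‖G‖ * ‖β‖)) ≤ c) (x : H₀ × H₁) :
    perturbedEnergy α β G ε x ≤ (‖α‖ + ‖β‖ + c / 2) * (‖x.1‖ ^ 2 + ‖x.2‖ ^ 2) := by
  have := (abs_le.mp (abs_two_mul_re_inner_le hε hεc x)).1
  have h₁ := (abs_le.mp (abs_re_inner_apply_le α x.1 x.1)).2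
  have h₂ := (abs_le.mp (abs_re_inner_apply_le β x.2 x.2)).2
  simp only [perturbedEnergy]
  nlinarith [mul_nonneg (norm_nonneg α) (sq_nonneg ‖x.2‖),
    mul_nonneg (norm_nonneg β) (sq_nonneg ‖x.1‖)]

theorem hasDerivWithinAt_perturbedEnergy [CompleteSpace H₀] [CompleteSpace H₁]
    (hα : IsSelfAdjoint α) (hαu : IsUnit α) (hβ : IsSelfAdjoint β) (hβu : IsUnit β)
    {U : ℝ → H₀ × H₁} {p : H₀} {q : H₁}
    {s : Set ℝ} {t : ℝ} (hU : HasDerivWithinAt (fun t => (α (U t).1, β (U t).2)) (p, q) s t) :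
    HasDerivWithinAt (fun t => perturbedEnergy α β G ε (U t))
      (2 * (⟪p, (U t).1⟫_ℂ).re + 2 * (⟪q, (U t).2⟫_ℂ).re
        - 2 * ε * ((⟪α (U t).1, G q⟫_ℂ).re + (⟪p, G (β (U t).2)⟫_ℂ).re)) s t := by
  have hp : HasDerivWithinAt (fun t => α (U t).1) p s t :=
    (ContinuousLinearMap.fst ℝ H₀ H₁).hasFDerivAt.comp_hasDerivWithinAt t hU
  have hq : HasDerivWithinAt (fun t => β (U t).2) q s t :=
    (ContinuousLinearMap.snd ℝ H₀ H₁).hasFDerivAt.comp_hasDerivWithinAt t hU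
  have hw : HasDerivWithinAt (fun t => G (β (U t).2)) (G q) s t :=
    (G.restrictScalars ℝ).hasFDerivAt.comp_hasDerivWithinAt t hq
  exact ((hp.re_inner_apply_self hα hαu).add (hq.re_inner_apply_self hβ hβu)).sub
    ((hp.re_inner hw).const_mul (2 * ε))

theorem perturbedEnergy_deriv_le [CompleteSpace H₀] {C : H₀ →ₗ.[ℂ] H₁}
    (hdense : Dense (C.domain : Set H₀))
    (hG : ∀ x y, (x, y) ∈ C.graph → (G y, y) ∈ C.graph ∧ ‖G y‖ ≤ ‖x‖)
    (hβc : ∀ x, c * ‖x‖ ^ 2 ≤ (⟪β x, x⟫_ℂ).re) {γ : H₀ →L[ℂ] H₀}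
    (hγ : ∀ x, c * ‖x‖ ^ 2 ≤ (⟪γ x, x⟫_ℂ).re) (hc : 0 < c) (hε : 0 ≤ ε) (hε₁ : ε ≤ 1)
    (hεc : ε * (2 * ‖α‖ + (‖γ‖ * (‖G‖ * ‖β‖)) ^ 2 / c) ≤ c)
    {u p : H₀} {v q : H₁} (hu : (u, -q) ∈ C.graph) (hv : (v, p + γ u) ∈ C.adjoint.graph)
    (hβv : β v ∈ LinearMap.range C.toFun) :
    2 * (⟪p, u⟫_ℂ).re + 2 * (⟪q, v⟫_ℂ).re - 2 * ε * ((⟪α u, G q⟫_ℂ).re + (⟪p, G (β v)⟫_ℂ).re)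
      ≤ -(ε * c) * (‖u‖ ^ 2 + ‖v‖ ^ 2) := by
  rw [← C.graph_map_snd_eq_range] at hβv
  obtain ⟨⟨x, _⟩, hx, rfl⟩ := hβv
  have henergy : (⟪p, u⟫_ℂ).re + (⟪q, v⟫_ℂ).re = -(⟪γ u, u⟫_ℂ).re := by
    have := congrArg Complex.re (LinearPMap.inner_eq_of_mem_graph_of_mem_adjoint_graph hdense hu hv)
    rw [inner_add_left, inner_neg_right, Complex.add_re, Complex.neg_re,
      complex_inner_re_symm v] at this
    linarith
  have hcross : (⟪p, G (β v)⟫_ℂ).re = (⟪β v, v⟫_ℂ).re - (⟪γ u, G (β v)⟫_ℂ).re := by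
    have := congrArg Complex.re (LinearPMap.inner_eq_of_mem_graph_of_mem_adjoint_graph hdense
      (hG _ _ hx).1 hv)
    rw [inner_add_left, Complex.add_re, complex_inner_re_symm v] at this
    linarith
  have hGq : ‖G q‖ ≤ ‖u‖ := by simpa using (hG _ _ hu).2
  have hαGq : -(⟪α u, G q⟫_ℂ).re ≤ ‖α‖ * ‖u‖ ^ 2 := by
    have := (abs_le.mp (abs_re_inner_apply_le α u (G q))).1
    nlinarith [mul_le_mul_of_nonneg_left hGq (by positivity : 0 ≤ ‖α‖ * ‖u‖)]
  set κ := ‖γ‖ * (‖G‖ * ‖β‖)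
  have hγw : (⟪γ u, G (β v)⟫_ℂ).re ≤ κ * ‖u‖ * ‖v‖ := by
    have := (abs_le.mp (abs_re_inner_apply_le γ u (G (β v)))).2
    nlinarith [mul_le_mul_of_nonneg_left (G.norm_apply_apply_le β v)
      (by positivity : 0 ≤ ‖γ‖ * ‖u‖)]
  have hamgm : 2 * (κ * ‖u‖ * ‖v‖) ≤ κ ^ 2 / c * ‖u‖ ^ 2 + c * ‖v‖ ^ 2 := by
    have h := sq_nonneg (κ * ‖u‖ - c * ‖v‖)
    rw [div_mul_eq_mul_div, div_add' _ _ _ hc.ne', le_div_iff₀ hc]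
    nlinarith
  nlinarith [hγ u, hβc v, mul_le_mul_of_nonneg_left hαGq hε, mul_le_mul_of_nonneg_left hγw hε,
    mul_le_mul_of_nonneg_left (hβc v) hε, mul_le_mul_of_nonneg_left hamgm hε,
    mul_le_mul_of_nonneg_right hεc (sq_nonneg ‖u‖),
    mul_le_mul_of_nonneg_right hε₁ (mul_nonneg hc.le (sq_nonneg ‖u‖))]

end PerturbedEnergy

/-- main exponential stability theorem: for `α, β` selfadjoint `≥ c > 0`,
`Re γ ≥ c`, and `C` densely defined, closed with closed range, there are `δ > 0` and
`M ≥ 1` such that every classical solution `U` of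
`(diag(α,β) U)' = (-γ U₁ + C* U₂, -C U₁)` on `[0,∞)` with
`U(0) ∈ dom C × (dom C* ∩ β⁻¹ ran C)` satisfies `‖U(t)‖ ≤ M e^{-δt} ‖U(0)‖`. -/
theorem stmt18 {H₀ H₁ : Type*} [NormedAddCommGroup H₀] [InnerProductSpace ℂ H₀] [CompleteSpace H₀]
    [NormedAddCommGroup H₁] [InnerProductSpace ℂ H₁] [CompleteSpace H₁]
    (α : H₀ →L[ℂ] H₀) (β : H₁ →L[ℂ] H₁) (γ : H₀ →L[ℂ] H₀) (c : ℝ) (hc : 0 < c)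
    (hα : IsSelfAdjoint α) (hβ : IsSelfAdjoint β)
    (hαc : ∀ x : H₀, c * ‖x‖ ^ 2 ≤ (inner ℂ (α x) x : ℂ).re)
    (hβc : ∀ x : H₁, c * ‖x‖ ^ 2 ≤ (inner ℂ (β x) x : ℂ).re)
    (hγ : ∀ x : H₀, c * ‖x‖ ^ 2 ≤ (inner ℂ (γ x) x : ℂ).re)
    (C : H₀ →ₗ.[ℂ] H₁) (hdense : Dense (C.domain : Set H₀)) (hclosed : C.IsClosed)
    (hran : IsClosed ((LinearMap.range C.toFun : Submodule ℂ H₁) : Set H₁)) :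
    ∃ δ > (0 : ℝ), ∃ M : ℝ, 1 ≤ M ∧
      ∀ U : ℝ → H₀ × H₁,
        ContinuousOn U (Set.Ici 0) →
        (∀ t : ℝ, 0 ≤ t →
          ∃ (h₁ : (U t).1 ∈ C.domain) (h₂ : (U t).2 ∈ C.adjoint.domain),
            HasDerivWithinAt (fun s : ℝ => (α (U s).1, β (U s).2))
              (-(γ (U t).1) + C.adjoint ⟨(U t).2, h₂⟩, -(C ⟨(U t).1, h₁⟩))
              (Set.Ici 0) t) →
        β (U 0).2 ∈ LinearMap.range C.toFun →
        ∀ t : ℝ, 0 ≤ t → ‖U t‖ ≤ M * Real.exp (-δ * t) * ‖U 0‖ := by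
  obtain ⟨G, hG⟩ := hclosed.exists_clm_preimage hran
  obtain ⟨ε, hε, hε₁, hεα, hεγ⟩ := exists_small_weight (g := ‖γ‖ * (‖G‖ * ‖β‖))
    (norm_nonneg α) (by positivity : 0 ≤ ‖G‖ * ‖β‖) hc
  set b := ‖α‖ + ‖β‖ + c / 2
  refine ⟨ε * c / b / 2, by positivity, Real.sqrt (2 * (b / (c / 2))), ?_,
    fun U _ hU hU0 t ht => ?_⟩
  · have : 1 ≤ b / (c / 2) := (one_le_div (half_pos hc)).mpr (le_add_of_nonneg_left (by positivity))
    exact Real.one_le_sqrt.mpr (by linarith)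
  choose! p q hpq hu hv using fun s (hs : 0 ≤ s) => exists_hasDerivWithinAt_prod_mem_graph (hU s hs)
  have hβv : ∀ s, 0 ≤ s → β (U s).2 ∈ LinearMap.range C.toFun :=
    fun s hs => Submodule.mem_of_hasDerivWithinAt_mem hran
      (fun s hs => (ContinuousLinearMap.snd ℝ H₀ H₁).hasFDerivAt.comp_hasDerivWithinAt s (hpq s hs))
      (fun s hs => by simpa using Submodule.neg_mem _ (LinearPMap.mem_range_of_mem_graph (hu s hs)))
      hU0 hs
  have hN := le_mul_exp_of_lyapunov (F := fun s => perturbedEnergy α β G ε (U s))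
    (N := fun s => ‖(U s).1‖ ^ 2 + ‖(U s).2‖ ^ 2) (half_pos hc) (by positivity : 0 < b)
    (by positivity : 0 ≤ ε * c)
    (fun s hs => ⟨_, hasDerivWithinAt_perturbedEnergy hα (hα.isUnit_of_coercive hc hαc) hβ
      (hβ.isUnit_of_coercive hc hβc) (hpq s hs),
      perturbedEnergy_deriv_le hdense hG hβc hγ hc hε.le hε₁ hεγ (hu s hs) (hv s hs) (hβv s hs)⟩)
    (fun s _ => half_mul_le_perturbedEnergy hε.le hεα hαc hβc (U s))
    (fun s _ => perturbedEnergy_le hε.le hεα (U s)) ht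
  exact Prod.norm_le_sqrt_mul_exp (by positivity) hN
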